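/- Let μ be a Borel measure on ℝ finite on bounded sets. Then for μ-almost every x ∈ ℝ, liminf_{r↓0} log μ([x, x+r]) / log r = liminf_{r↓0} log μ([x-r, x+r]) / log r and limsup_{r↓0} log μ([x, x+r]) / log r = limsup_{r↓0} log μ([x-r, x+r]) / log r; i.e., local dimensions on ℝ can be computed via one-sided intervals μ-almost everywhere. -/

import Mathlib

/-!
Since `[x, x + r] ⊆ [x - r, x + r]` and `log r < 0`, the one-sided ratio is never below the
two-sided one. Conversely, call `x` lopsided at scale `h` if `μ [x, x + r] < δ * μ [x - r, x + r]`
for some `r ∈ (h, 2h]`. Inside a cell of length `h`, all lopsided points to the right of a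
lopsided point `x` lie in its half-interval `[x, x + r]`, so their mass is at most `δ` times that
of a window of five cells. With `δ = (2h) ^ ε`, summing over cells shows that the lopsided points
at scale `2⁻ⁿ` in a bounded set have measure `O(2^(-nε))`, and Borel–Cantelli gives
`μ [x, x + r] ≥ r ^ ε * μ [x - r, x + r]` for small `r` and `μ`-a.e. `x`. Taking logarithms, the
two ratios then differ by at most `ε`.
-/

open Set MeasureTheory Filter
open scoped ENNReal Topology

theorem sSup_eq_of_subset_of_forall_sub_mem {S T : Set ℝ} (hST : S ⊆ T)
    (h : ∀ ε > 0, ∀ a ∈ T, a - ε ∈ S) : sSup S = sSup T := by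
  rcases T.eq_empty_or_nonempty with rfl | ⟨a, ha⟩
  · rw [subset_empty_iff.mp hST]
  by_cases hT : BddAbove T
  · refine le_antisymm (csSup_le_csSup hT ⟨_, h 1 one_pos a ha⟩ hST) ?_
    refine le_of_forall_pos_le_add fun ε hε => csSup_le ⟨a, ha⟩ fun b hb => ?_
    linarith [le_csSup (hT.mono hST) (h ε hε b hb)]
  · have hS : ¬BddAbove S := fun ⟨c, hc⟩ =>
      hT ⟨c + 1, fun b hb => by linarith [hc (h 1 one_pos b hb)]⟩
    rw [Real.sSup_of_not_bddAbove hS, Real.sSup_of_not_bddAbove hT]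

theorem sInf_eq_of_subset_of_forall_add_mem {S T : Set ℝ} (hST : S ⊆ T)
    (h : ∀ ε > 0, ∀ a ∈ T, a + ε ∈ S) : sInf S = sInf T := by
  rw [Real.sInf_def, Real.sInf_def, sSup_eq_of_subset_of_forall_sub_mem (neg_subset_neg.mpr hST)]
  intro ε hε a ha
  simpa [sub_eq_add_neg, add_comm] using h ε hε (-a) ha

section Sandwich

variable {α : Type*} {f g : α → ℝ} {l : Filter α}

theorem liminf_eq_of_eventually_le_add (hgf : ∀ᶠ x in l, g x ≤ f x)
    (hfg : ∀ ε > 0, ∀ᶠ x in l, f x ≤ g x + ε) : liminf f l = liminf g l := by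
  rw [liminf_eq, liminf_eq]
  refine (sSup_eq_of_subset_of_forall_sub_mem (fun a ha => ?_) fun ε hε a ha => ?_).symm
  · filter_upwards [ha, hgf] with x h₁ h₂ using h₁.trans h₂
  · filter_upwards [ha, hfg ε hε] with x h₁ h₂
    linarith

theorem limsup_eq_of_eventually_le_add (hgf : ∀ᶠ x in l, g x ≤ f x)
    (hfg : ∀ ε > 0, ∀ᶠ x in l, f x ≤ g x + ε) : limsup f l = limsup g l := by
  rw [limsup_eq, limsup_eq]
  refine sInf_eq_of_subset_of_forall_add_mem (fun a ha => ?_) fun ε hε a ha => ?_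
  · filter_upwards [ha, hgf] with x h₁ h₂ using h₂.trans h₁
  · filter_upwards [ha, hfg ε hε] with x h₁ h₂
    linarith

end Sandwich

theorem Real.log_div_log_sandwich_of_rpow_mul_le {r a b ε : ℝ} (hr₀ : 0 < r) (hr₁ : r < 1)
    (hb : 0 < b) (hab : a ≤ b) (h : r ^ ε * b ≤ a) :
    Real.log b / Real.log r ≤ Real.log a / Real.log r ∧
      Real.log a / Real.log r ≤ Real.log b / Real.log r + ε := by
  have hlog : Real.log r < 0 := Real.log_neg hr₀ hr₁
  have hrε : 0 < r ^ ε := Real.rpow_pos_of_pos hr₀ ε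
  have ha : 0 < a := (mul_pos hrε hb).trans_le h
  refine ⟨(div_le_div_right_of_neg hlog).mpr (Real.log_le_log ha hab), ?_⟩
  have := (div_le_div_right_of_neg hlog).mpr (Real.log_le_log (mul_pos hrε hb) h)
  rwa [Real.log_mul hrε.ne' hb.ne', Real.log_rpow hr₀, add_div, mul_div_cancel_right₀ _ hlog.ne,
    add_comm] at this

section Lopsided

variable (μ : Measure ℝ)

theorem measure_le_of_forall_measure_inter_Ici_le {S : Set ℝ} (hS : BddBelow S) {c : ℝ≥0∞}
    (h : ∀ x ∈ S, μ (S ∩ Ici x) ≤ c) : μ S ≤ c := by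
  rcases S.eq_empty_or_nonempty with rfl | hne
  · simp
  have hglb := isGLB_csInf hne hS
  by_cases hmem : sInf S ∈ S
  · simpa [inter_eq_left.mpr fun y hy => mem_Ici.mpr (csInf_le hS hy)] using h _ hmem
  obtain ⟨u, hu_anti, -, hu_lim, hu_mem⟩ := hglb.exists_seq_strictAnti_tendsto_of_notMem hmem hne
  have hcover : S ⊆ ⋃ n, S ∩ Ici (u n) := fun y hy => by
    have hlt : sInf S < y := (csInf_le hS hy).lt_of_ne fun he => hmem (he ▸ hy)
    obtain ⟨n, hn⟩ := (hu_lim.eventually (gt_mem_nhds hlt)).exists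
    exact mem_iUnion.mpr ⟨n, hy, hn.le⟩
  have hmono : Monotone fun n => S ∩ Ici (u n) :=
    fun m n hmn => inter_subset_inter_right _ (Ici_subset_Ici.mpr (hu_anti.antitone hmn))
  calc μ S ≤ μ (⋃ n, S ∩ Ici (u n)) := measure_mono hcover
    _ = ⨆ n, μ (S ∩ Ici (u n)) := hmono.measure_iUnion
    _ ≤ c := iSup_le fun n => h _ (hu_mem n)

def lopsided (δ : ℝ≥0∞) (h : ℝ) : Set ℝ :=
  {x | ∃ r ∈ Ioc h (2 * h), μ (Icc x (x + r)) < δ * μ (Icc (x - r) (x + r))}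

theorem measure_le_of_subset_lopsided {δ : ℝ≥0∞} {h a : ℝ} {S B : Set ℝ}
    (hS : S ⊆ lopsided μ δ h) (hSa : S ⊆ Ico a (a + h))
    (hB : ∀ x ∈ S, Icc (x - 2 * h) (x + 2 * h) ⊆ B) : μ S ≤ δ * μ B := by
  refine measure_le_of_forall_measure_inter_Ici_le μ ⟨a, fun x hx => (hSa hx).1⟩ fun x hx => ?_
  obtain ⟨r, ⟨hhr, hr2h⟩, hlt⟩ := hS hx
  have hsub : S ∩ Ici x ⊆ Icc x (x + r) := fun y ⟨hyS, hxy⟩ =>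
    ⟨hxy, by linarith [(hSa hyS).2, (hSa hx).1]⟩
  calc μ (S ∩ Ici x) ≤ μ (Icc x (x + r)) := measure_mono hsub
    _ ≤ δ * μ (Icc (x - r) (x + r)) := hlt.le
    _ ≤ δ * μ B := by
      gcongr
      exact (Icc_subset_Icc (by linarith) (by linarith)).trans (hB x hx)

theorem measure_Ico_add_zsmul_inter_le_sum {p a : ℝ} (U : Set ℝ) (k : ℤ) (n : ℕ) :
    μ (Ico (a + k • p) (a + (k + n) • p) ∩ U) ≤
      ∑ i ∈ Finset.range n, μ (Ico (a + (k + i) • p) (a + (k + i + 1) • p) ∩ U) := by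
  induction n with
  | zero => simp
  | succ n ih =>
    rw [Finset.sum_range_succ]
    refine (measure_mono ?_).trans ((measure_union_le _ _).trans (add_le_add_left ih _))
    rw [← union_inter_distrib_right, Nat.cast_succ, ← add_assoc]
    exact inter_subset_inter_left _ Ico_subset_Ico_union_Ico

theorem tsum_measure_Ico_add_zsmul_inter_le {p : ℝ} (hp : 0 < p) (a : ℝ) (U : Set ℝ) (n : ℕ) :
    ∑' k : ℤ, μ (Ico (a + k • p) (a + (k + n) • p) ∩ U) ≤ n * μ U := by
  have hcells : ∑' k : ℤ, μ (Ico (a + k • p) (a + (k + 1) • p) ∩ U) = μ U := by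
    simp_rw [← Measure.restrict_apply measurableSet_Ico]
    rw [← measure_iUnion (pairwise_disjoint_Ico_add_zsmul a p) fun _ => measurableSet_Ico,
      iUnion_Ico_add_zsmul hp, Measure.restrict_apply_univ]
  calc ∑' k : ℤ, μ (Ico (a + k • p) (a + (k + n) • p) ∩ U)
      ≤ ∑' k : ℤ, ∑ i ∈ Finset.range n, μ (Ico (a + (k + i) • p) (a + (k + i + 1) • p) ∩ U) :=
        ENNReal.tsum_le_tsum fun k => measure_Ico_add_zsmul_inter_le_sum μ U k n
    _ = ∑ i ∈ Finset.range n, ∑' k : ℤ, μ (Ico (a + (k + i) • p) (a + (k + i + 1) • p) ∩ U) :=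
        Summable.tsum_finsetSum fun _ _ => ENNReal.summable
    _ = ∑ i ∈ Finset.range n, μ U := by
        refine Finset.sum_congr rfl fun i _ => ?_
        rw [← hcells]
        exact (Equiv.addRight (i : ℤ)).tsum_eq fun k => μ (Ico (a + k • p) (a + (k + 1) • p) ∩ U)
    _ = n * μ U := by simp

theorem measure_lopsided_inter_le {δ : ℝ≥0∞} {h : ℝ} (hh : 0 < h) {T U : Set ℝ}
    (hTU : ∀ x ∈ T, Icc (x - 2 * h) (x + 2 * h) ⊆ U) :
    μ (lopsided μ δ h ∩ T) ≤ 5 * δ * μ U := by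
  set cell : ℤ → Set ℝ := fun k => Ico (k • h) ((k + 1) • h)
  set window : ℤ → Set ℝ := fun k => Ico (-2 * h + k • h) (-2 * h + (k + (5 : ℕ)) • h)
  have hcell : ∀ k, μ (lopsided μ δ h ∩ T ∩ cell k) ≤ δ * μ (window k ∩ U) := by
    intro k
    refine measure_le_of_subset_lopsided μ (fun x hx => hx.1.1) (a := k • h) ?_ ?_
    · rintro x ⟨-, hx₁, hx₂⟩
      exact ⟨hx₁, by rwa [add_zsmul, one_zsmul] at hx₂⟩
    · rintro x ⟨⟨-, hxT⟩, hx₁, hx₂⟩ y hy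
      refine ⟨⟨?_, ?_⟩, hTU x hxT hy⟩ <;>
        simp only [zsmul_eq_mul, Int.cast_add, Int.cast_one, Int.cast_natCast] at * <;>
        push_cast at * <;> linarith [hy.1, hy.2]
  calc μ (lopsided μ δ h ∩ T)
      ≤ ∑' k, μ (lopsided μ δ h ∩ T ∩ cell k) := by
        conv_lhs => rw [← inter_univ (lopsided μ δ h ∩ T), ← iUnion_Ico_zsmul hh, inter_iUnion]
        exact measure_iUnion_le _
    _ ≤ ∑' k, δ * μ (window k ∩ U) := ENNReal.tsum_le_tsum hcell
    _ = δ * ∑' k, μ (window k ∩ U) := ENNReal.tsum_mul_left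
    _ ≤ δ * (5 * μ U) := by
        gcongr
        exact (tsum_measure_Ico_add_zsmul_inter_le μ hh (-2 * h) U 5).trans_eq (by norm_num)
    _ = 5 * δ * μ U := by ring

theorem ae_eventually_notMem_lopsided (hfin : ∀ s : Set ℝ, Bornology.IsBounded s → μ s < ⊤)
    {δ : ℕ → ℝ≥0∞} (hδ : ∑' n, δ n ≠ ∞) {h : ℕ → ℝ} (hh₀ : ∀ n, 0 < h n)
    (hh₁ : ∀ n, h n ≤ 1 / 2) : ∀ᵐ x ∂μ, ∀ᶠ n in atTop, x ∉ lopsided μ (δ n) (h n) := by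
  have hM : ∀ M : ℕ, ∀ᵐ x ∂μ, ∀ᶠ n in atTop, x ∉ lopsided μ (δ n) (h n) ∩ Icc (-M) M := by
    intro M
    set U := Icc (-(M : ℝ) - 1) (M + 1)
    have hU : ∀ n, μ (lopsided μ (δ n) (h n) ∩ Icc (-M) M) ≤ 5 * μ U * δ n := fun n =>
      (measure_lopsided_inter_le μ (hh₀ n) fun x hx y hy => show y ∈ U from
        ⟨by linarith [hx.1, hy.1, hh₁ n], by linarith [hx.2, hy.2, hh₁ n]⟩).trans_eq (by ring)
    refine ae_eventually_notMem (ne_top_of_le_ne_top ?_ (ENNReal.tsum_le_tsum hU))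
    rw [ENNReal.tsum_mul_left]
    exact ENNReal.mul_ne_top (ENNReal.mul_ne_top (by norm_num)
      (hfin U (Metric.isBounded_Icc _ _)).ne) hδ
  filter_upwards [ae_all_iff.mpr hM] with x hx
  obtain ⟨M, hxM⟩ := exists_nat_ge |x|
  filter_upwards [hx M] with n hn hxn using hn ⟨hxn, abs_le.mp hxM⟩

theorem ae_eventually_rpow_mul_measure_Icc_le
    (hfin : ∀ s : Set ℝ, Bornology.IsBounded s → μ s < ⊤) {ε : ℝ} (hε : 0 < ε) :
    ∀ᵐ x ∂μ, ∀ᶠ r in 𝓝[>] 0,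
      ENNReal.ofReal (r ^ ε) * μ (Icc (x - r) (x + r)) ≤ μ (Icc x (x + r)) := by
  set q : ℝ := (2⁻¹ : ℝ) ^ ε
  have hq₀ : 0 ≤ q := by positivity
  have hsum : ∑' n : ℕ, ENNReal.ofReal q ^ n ≠ ∞ := by
    rw [ENNReal.tsum_geometric]
    refine ENNReal.inv_ne_top.mpr (tsub_pos_of_lt (ENNReal.ofReal_lt_one.mpr ?_)).ne'
    exact Real.rpow_lt_one (by norm_num) (by norm_num) hε
  have hscale : ∀ n : ℕ, (2⁻¹ : ℝ) ^ (n + 1) ≤ 1 / 2 := fun n =>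
    (pow_le_pow_of_le_one (by norm_num) (by norm_num) (Nat.le_add_left 1 n)).trans_eq (by norm_num)
  filter_upwards [ae_eventually_notMem_lopsided μ hfin hsum (h := fun n => (2⁻¹ : ℝ) ^ (n + 1))
    (fun n => by positivity) hscale] with x hx
  obtain ⟨N, hN⟩ := eventually_atTop.mp hx
  filter_upwards [Ioc_mem_nhdsGT (show (0 : ℝ) < 2⁻¹ ^ N by positivity)] with r ⟨hr₀, hrN⟩
  obtain ⟨n, hn₁, hn₂⟩ := exists_nat_pow_near_of_lt_one hr₀
    (hrN.trans (pow_le_one₀ (by norm_num) (by norm_num))) (by norm_num : (0 : ℝ) < 2⁻¹)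
    (by norm_num)
  have hNn : N < n + 1 :=
    (pow_lt_pow_iff_right_of_lt_one₀ (by norm_num) (by norm_num)).mp (hn₁.trans_le hrN)
  have hr : r ∈ Ioc ((2⁻¹ : ℝ) ^ (n + 1)) (2 * 2⁻¹ ^ (n + 1)) :=
    ⟨hn₁, hn₂.trans_eq (by rw [pow_succ]; ring)⟩
  have hgood := hN n (Nat.lt_succ_iff.mp hNn)
  simp only [lopsided, mem_ofPred_eq, not_exists, not_and, not_lt] at hgood
  refine le_trans (mul_le_mul_left ?_ _) (hgood r hr)
  rw [← ENNReal.ofReal_pow hq₀]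
  refine ENNReal.ofReal_le_ofReal ?_
  calc r ^ ε ≤ ((2⁻¹ : ℝ) ^ n) ^ ε := Real.rpow_le_rpow hr₀.le hn₂ hε.le
    _ = q ^ n := (Real.rpow_pow_comm (by norm_num) ε n).symm

theorem ae_forall_eventually_rpow_mul_measure_Icc_le
    (hfin : ∀ s : Set ℝ, Bornology.IsBounded s → μ s < ⊤) :
    ∀ᵐ x ∂μ, ∀ ε > (0 : ℝ), ∀ᶠ r in 𝓝[>] 0,
      ENNReal.ofReal (r ^ ε) * μ (Icc (x - r) (x + r)) ≤ μ (Icc x (x + r)) := by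
  filter_upwards [ae_all_iff.mpr fun k : ℕ =>
    ae_eventually_rpow_mul_measure_Icc_le μ hfin (Nat.one_div_pos_of_nat (n := k))] with x hx
  intro ε hε
  obtain ⟨k, hk⟩ := exists_nat_one_div_lt hε
  filter_upwards [hx k, Ioc_mem_nhdsGT one_pos] with r hr ⟨hr₀, hr₁⟩
  refine le_trans (mul_le_mul_left (ENNReal.ofReal_le_ofReal ?_) _) hr
  exact Real.rpow_le_rpow_of_exponent_ge hr₀ hr₁ hk.le

theorem log_measure_Icc_div_log_sandwich {x r ε : ℝ} (hr₀ : 0 < r) (hr₁ : r < 1)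
    (hsupp : x ∈ μ.support) (hfinite : μ (Icc (x - r) (x + r)) ≠ ∞)
    (h : ENNReal.ofReal (r ^ ε) * μ (Icc (x - r) (x + r)) ≤ μ (Icc x (x + r))) :
    Real.log (μ (Icc (x - r) (x + r))).toReal / Real.log r ≤
        Real.log (μ (Icc x (x + r))).toReal / Real.log r ∧
      Real.log (μ (Icc x (x + r))).toReal / Real.log r ≤
        Real.log (μ (Icc (x - r) (x + r))).toReal / Real.log r + ε := by
  have hpos : μ (Icc (x - r) (x + r)) ≠ 0 := (μ.mem_support_iff_forall x |>.mp hsupp _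
    (Icc_mem_nhds (by linarith) (by linarith))).ne'
  have hsub : μ (Icc x (x + r)) ≤ μ (Icc (x - r) (x + r)) :=
    measure_mono (Icc_subset_Icc_left (by linarith))
  refine Real.log_div_log_sandwich_of_rpow_mul_le hr₀ hr₁ (ENNReal.toReal_pos hpos hfinite)
    (ENNReal.toReal_mono hfinite hsub) ?_
  have := ENNReal.toReal_mono (ne_top_of_le_ne_top hfinite hsub) h
  rwa [ENNReal.toReal_mul, ENNReal.toReal_ofReal (by positivity)] at this

end Lopsided

/-- For a Borel measure `μ` on `ℝ` finite on bounded sets, for `μ`-a.e. `x` the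
upper and lower local dimensions of `μ` at `x` can be computed using the one-sided
intervals `[x, x+r]` in place of the two-sided intervals `[x-r, x+r]`. -/
theorem stmt_7 (μ : Measure ℝ)
    (hfin : ∀ s : Set ℝ, Bornology.IsBounded s → μ s < ⊤) :
    ∀ᵐ x ∂μ,
      liminf (fun r : ℝ => Real.log (μ (Icc x (x + r))).toReal / Real.log r) (𝓝[>] 0)
        = liminf (fun r : ℝ =>
            Real.log (μ (Icc (x - r) (x + r))).toReal / Real.log r) (𝓝[>] 0) ∧
      limsup (fun r : ℝ => Real.log (μ (Icc x (x + r))).toReal / Real.log r) (𝓝[>] 0)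
        = limsup (fun r : ℝ =>
            Real.log (μ (Icc (x - r) (x + r))).toReal / Real.log r) (𝓝[>] 0) := by
  filter_upwards [μ.support_mem_ae, ae_forall_eventually_rpow_mul_measure_Icc_le μ hfin]
    with x hsupp hcomp
  have hsandwich : ∀ ε > (0 : ℝ), ∀ᶠ r in 𝓝[>] 0,
      Real.log (μ (Icc (x - r) (x + r))).toReal / Real.log r ≤
          Real.log (μ (Icc x (x + r))).toReal / Real.log r ∧
        Real.log (μ (Icc x (x + r))).toReal / Real.log r ≤
          Real.log (μ (Icc (x - r) (x + r))).toReal / Real.log r + ε := fun ε hε => by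
    filter_upwards [hcomp ε hε, Ioo_mem_nhdsGT one_pos] with r hr ⟨hr₀, hr₁⟩
    exact log_measure_Icc_div_log_sandwich μ hr₀ hr₁ hsupp
      (hfin _ (Metric.isBounded_Icc _ _)).ne hr
  have hle := (hsandwich 1 one_pos).mono fun _ h => h.1
  have hle_add := fun ε hε => (hsandwich ε hε).mono fun _ h => h.2
  exact ⟨liminf_eq_of_eventually_le_add hle hle_add, limsup_eq_of_eventually_le_add hle hle_add⟩
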